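/- Let X be a separable metrizable space and let (X_s)_{s∈T} be a Sierpiński stratification of X. Let T' = {∅} ∪ { ⟨n⟩⌢(s₁*⋯*sₙ) : n ∈ ℕ, s₁*⋯*sₙ ∈ Tⁿ }, where Tⁿ = { s₁*⋯*sₙ : s₁,…,sₙ ∈ T, |s₁| = ⋯ = |sₙ| } is the tree of n-tuples of equal-length nodes of T ordered coordinatewise. Define Y_∅ = ℱ(X) and Y_{⟨n⟩⌢(s₁*⋯*sₙ)} = φₙ[X_{s₁} × ⋯ × X_{sₙ}] ⊆ ℱ(X). Then (Y_t)_{t∈T'} is a Sierpiński stratification of ℱ(X). -/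

import Mathlib

open Set Topology Filter

/-- The Vietoris topology on `Set X` induced by a topology `t` on `X`, generated by the
subbasic sets `{F | F ⊆ U}` and `{F | F ∩ U ≠ ∅}` for `U` open in `t`. -/
def vietoris {X : Type*} (t : TopologicalSpace X) : TopologicalSpace (Set X) :=
  TopologicalSpace.generateFrom
    {S | (∃ U : Set X, IsOpen[t] U ∧ S = {F : Set X | F ⊆ U}) ∨
         (∃ U : Set X, IsOpen[t] U ∧ S = {F : Set X | (F ∩ U).Nonempty})}

/-- `ℱ(X)`: the hyperspace of nonempty finite subsets of `X`. -/
def FinHyp (X : Type*) : Type _ := {F : Set X // F.Finite ∧ F.Nonempty}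

noncomputable instance FinHyp.instCoeOut {X : Type*} : CoeOut (FinHyp X) (Set X) :=
  ⟨Subtype.val⟩

/-- `ℱ(X)` carries the (subspace) Vietoris topology. -/
instance FinHyp.instTopologicalSpace {X : Type*} [t : TopologicalSpace X] :
    TopologicalSpace (FinHyp X) :=
  (vietoris t).induced Subtype.val

/-- `(Xs s)_{s ∈ T}` is a Sierpiński stratification of the space `X`:
`T` is a nonempty tree over a countable alphabet `A` (a nonempty, prefix-closed set of
finite sequences), each `Xs s` is closed, `Xs ∅ = X`, each `Xs s` is the union of the
`Xs t` for `t` an immediate successor of `s` in `T`, and along every infinite branch the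
sets converge to a point. -/
structure IsSierpinskiStratification {X : Type*} [TopologicalSpace X] {A : Type*}
    (T : Set (List A)) (Xs : List A → Set X) : Prop where
  countable_alphabet : Countable A
  nonempty : T.Nonempty
  prefix_closed : ∀ l ∈ T, ∀ l' : List A, l' <+: l → l' ∈ T
  isClosed : ∀ s ∈ T, IsClosed (Xs s)
  root : Xs [] = Set.univ
  succ_eq : ∀ s ∈ T, Xs s = ⋃ t ∈ {t | t ∈ T ∧ ∃ a : A, t = s ++ [a]}, Xs t
  branch_converges : ∀ σ : ℕ → A, (∀ k : ℕ, (List.range k).map σ ∈ T) →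
    ∃ p : X, ∀ V ∈ nhds p, ∀ᶠ k in Filter.atTop, Xs ((List.range k).map σ) ⊆ V

/-- The node `⟨n⟩⌢(s₁*⋯*sₙ)` of the tree `T'`: the letter `n` followed by the node
`s₁*⋯*sₙ` of `Tⁿ` (encoded as a list over `Fin n → A`), written over the common alphabet
`ℕ ⊕ (Σ m : ℕ, Fin m → A)`. -/
def encodeNode {A : Type*} (n : ℕ) (l : List (Fin n → A)) :
    List (ℕ ⊕ (Σ m : ℕ, Fin m → A)) :=
  Sum.inl n :: l.map (fun f => Sum.inr ⟨n, f⟩)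

/-!
Points of a finite set `F` of a Hausdorff space can be separated by disjoint open sets, which can
moreover be chosen to avoid the closed sets `Xs sᵢ` missing them; the Vietoris neighbourhood of `F`
they define forces any member of `φₙ[∏ Xs sᵢ]` near `F` back onto an enumeration of `F` itself, so
these strata are closed. The union condition for `T'` is the coordinatewise one for `T`, and along
a branch of `T'` the `n` coordinate branches of `T` converge to points `p₁, …, pₙ`, which makes the
strata converge to `{p₁, …, pₙ}` in the Vietoris topology.
-/

theorem Set.PairwiseDisjoint.exists_range_eq {X ι : Type*} {S : Set X} {V : X → Set X}
    (hV : S.PairwiseDisjoint V) {f : ι → X} (hsub : Set.range f ⊆ ⋃ x ∈ S, V x)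
    (hmeet : ∀ x ∈ S, (Set.range f ∩ V x).Nonempty) :
    ∃ h : ι → X, (∀ i, f i ∈ V (h i)) ∧ Set.range h = S := by
  have : ∀ i, ∃ x ∈ S, f i ∈ V x := fun i => by simpa using hsub (Set.mem_range_self i)
  choose h hhS hfh using this
  refine ⟨h, hfh, (Set.range_subset_iff.2 hhS).antisymm fun x hx => ?_⟩
  obtain ⟨_, ⟨i, rfl⟩, hix⟩ := hmeet x hx
  exact ⟨i, hV.elim (hhS i) hx (not_disjoint_iff.2 ⟨f i, hfh i, hix⟩)⟩

namespace FinHyp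

variable {X ι : Type*}

def ofRange [Finite ι] [Nonempty ι] (f : ι → X) : FinHyp X :=
  ⟨range f, finite_range f, range_nonempty f⟩

/-- `φ[∏ i, C i]`, the finite sets enumerated by a selection of `C`. -/
def selectionRanges (C : ι → Set X) : Set (FinHyp X) :=
  {F | ∃ f : ι → X, (∀ i, f i ∈ C i) ∧ (F : Set X) = range f}

theorem selectionRanges_biUnion {α : Type*} {S : ι → Set α} {D : ι → α → Set X} :
    selectionRanges (fun i => ⋃ a ∈ S i, D i a) =
      ⋃ g ∈ univ.pi S, selectionRanges (fun i => D i (g i)) := by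
  ext F
  simp only [selectionRanges, mem_iUnion₂, mem_ofPred_eq, Set.mem_pi, mem_univ, true_implies]
  constructor
  · rintro ⟨f, hf, hF⟩
    choose g hgS hg using hf
    exact ⟨g, hgS, f, hg, hF⟩
  · rintro ⟨g, hgS, f, hf, hF⟩
    exact ⟨f, fun i => ⟨g i, hgS i, hf i⟩, hF⟩

theorem iUnion_selectionRanges_univ :
    ⋃ n > 0, selectionRanges (fun _ : Fin n => (univ : Set X)) = univ := by
  refine eq_univ_of_forall fun F => ?_
  obtain ⟨n, f, -, hf⟩ := F.2.1.fin_param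
  have hn : 0 < n := Fin.pos_iff_nonempty.2 (range_nonempty_iff_nonempty.1 (hf ▸ F.2.2))
  exact mem_biUnion hn ⟨f, fun _ => mem_univ _, hf.symm⟩

variable [TopologicalSpace X]

theorem isOpen_setOf_subset {U : Set X} (hU : IsOpen U) :
    IsOpen {F : FinHyp X | (F : Set X) ⊆ U} :=
  ⟨_, TopologicalSpace.isOpen_generateFrom_of_mem (Or.inl ⟨U, hU, rfl⟩), rfl⟩

theorem isOpen_setOf_inter_nonempty {U : Set X} (hU : IsOpen U) :
    IsOpen {F : FinHyp X | ((F : Set X) ∩ U).Nonempty} :=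
  ⟨_, TopologicalSpace.isOpen_generateFrom_of_mem (Or.inr ⟨U, hU, rfl⟩), rfl⟩

theorem tendsto_smallSets_nhds_iff {α : Type*} {l : Filter α} {S : α → Set (FinHyp X)}
    {F : FinHyp X} :
    Tendsto S l (𝓝 F).smallSets ↔
      (∀ U, IsOpen U → (F : Set X) ⊆ U → ∀ᶠ k in l, ∀ G ∈ S k, (G : Set X) ⊆ U) ∧
      (∀ U, IsOpen U → ((F : Set X) ∩ U).Nonempty →
        ∀ᶠ k in l, ∀ G ∈ S k, ((G : Set X) ∩ U).Nonempty) := by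
  rw [nhds_induced (T := vietoris _), smallSets_comap_eq_comap_image, tendsto_comap_iff, vietoris,
    TopologicalSpace.nhds_generateFrom]
  simp only [smallSets_iInf, tendsto_iInf, smallSets_principal, tendsto_principal]
  constructor
  · intro h
    refine ⟨fun U hU hFU => ?_, fun U hU hFU => ?_⟩
    · filter_upwards [h {G | G ⊆ U} ⟨hFU, .inl ⟨U, hU, rfl⟩⟩] with k hk G hG
      using hk (mem_image_of_mem _ hG)
    · filter_upwards [h {G | (G ∩ U).Nonempty} ⟨hFU, .inr ⟨U, hU, rfl⟩⟩] with k hk G hG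
      using hk (mem_image_of_mem _ hG)
  · rintro ⟨hsub, hmeet⟩ s ⟨hFs, ⟨U, hU, rfl⟩ | ⟨U, hU, rfl⟩⟩
    · filter_upwards [hsub U hU hFs] with k hk using image_subset_iff.2 hk
    · filter_upwards [hmeet U hU hFs] with k hk using image_subset_iff.2 hk

theorem tendsto_selectionRanges [Finite ι] [Nonempty ι] {α : Type*} {l : Filter α}
    {S : ι → α → Set X} {p : ι → X} (h : ∀ i, Tendsto (S i) l (𝓝 (p i)).smallSets) :
    Tendsto (fun k => selectionRanges fun i => S i k) l (𝓝 (ofRange p)).smallSets := by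
  refine tendsto_smallSets_nhds_iff.2 ⟨fun U hU hpU => ?_, ?_⟩
  · have hev : ∀ᶠ k in l, ∀ i, S i k ⊆ U := eventually_all.2 fun i =>
      tendsto_smallSets_iff.1 (h i) U (hU.mem_nhds (hpU (mem_range_self i)))
    filter_upwards [hev] with k hk
    rintro G ⟨f, hf, hG⟩
    exact hG ▸ range_subset_iff.2 fun i => hk i (hf i)
  · rintro U hU ⟨_, ⟨i, rfl⟩, hiU⟩
    filter_upwards [tendsto_smallSets_iff.1 (h i) U (hU.mem_nhds hiU)] with k hk
    rintro G ⟨f, hf, hG⟩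
    exact hG ▸ ⟨f i, mem_range_self i, hk (hf i)⟩

theorem isClosed_selectionRanges [T2Space X] [Finite ι] {C : ι → Set X}
    (hC : ∀ i, IsClosed (C i)) : IsClosed (selectionRanges C) := by
  rw [← isOpen_compl_iff, isOpen_iff_mem_nhds]
  intro F hF
  obtain ⟨U, hU, hUdisj⟩ := F.2.1.t2_separation
  set V : X → Set X := fun x => U x ∩ ⋂ i ∈ {i | x ∉ C i}, (C i)ᶜ
  have hVopen : ∀ x, IsOpen (V x) := fun x =>
    (hU x).2.inter ((toFinite _).isOpen_biInter fun i _ => (hC i).isOpen_compl)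
  have hxV : ∀ x, x ∈ V x := fun x => ⟨(hU x).1, mem_iInter₂.2 fun i hi => hi⟩
  have hVC : ∀ x i, (V x ∩ C i).Nonempty → x ∈ C i := fun x i ⟨_, hzV, hzC⟩ =>
    by_contra fun hx => mem_iInter₂.1 hzV.2 i hx hzC
  have hsub : {G : FinHyp X | (G : Set X) ⊆ ⋃ x ∈ (F : Set X), V x} ∈ 𝓝 F :=
    (isOpen_setOf_subset (isOpen_biUnion fun x _ => hVopen x)).mem_nhds
      fun x hx => mem_biUnion hx (hxV x)
  have hmeet : ∀ x ∈ (F : Set X), {G : FinHyp X | ((G : Set X) ∩ V x).Nonempty} ∈ 𝓝 F :=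
    fun x hx => (isOpen_setOf_inter_nonempty (hVopen x)).mem_nhds ⟨x, hx, hxV x⟩
  filter_upwards [hsub, (biInter_mem F.2.1).2 hmeet] with G hGsub hGmeet ⟨f, hf, hG⟩
  rw [hG] at hGsub
  obtain ⟨h, hfh, hh⟩ := (hUdisj.mono fun x => inter_subset_left).exists_range_eq hGsub
    fun x hx => hG ▸ mem_iInter₂.1 hGmeet x hx
  exact hF ⟨h, fun i => hVC _ i ⟨f i, hfh i, hf i⟩, hh.symm⟩

end FinHyp

section Trees

variable {A : Type*} {T : Set (List A)} {n : ℕ}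

/-- `Tⁿ`: a node `s₁*⋯*sₙ` is stored as the list of its letters, each an `n`-tuple. -/
def tupleTree (T : Set (List A)) (n : ℕ) : Set (List (Fin n → A)) :=
  {l | ∀ i, l.map (fun g => g i) ∈ T}

/-- The tree `T'` of the theorem. -/
def finHypTree (T : Set (List A)) : Set (List (ℕ ⊕ (Σ m : ℕ, Fin m → A))) :=
  {[]} ∪ {w | ∃ n, 0 < n ∧ ∃ l ∈ tupleTree T n, w = encodeNode n l}

theorem nil_mem_tupleTree (hT : [] ∈ T) : [] ∈ tupleTree T n := fun _ => hT

theorem take_mem_tupleTree (hT : ∀ s ∈ T, ∀ s', s' <+: s → s' ∈ T) {l : List (Fin n → A)}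
    (hl : l ∈ tupleTree T n) (k : ℕ) : l.take k ∈ tupleTree T n := fun i => by
  simpa only [List.map_take] using hT _ (hl i) _ (List.take_prefix _ _)

theorem append_singleton_mem_tupleTree_iff {l : List (Fin n → A)} {g : Fin n → A} :
    l ++ [g] ∈ tupleTree T n ↔ ∀ i, l.map (fun h => h i) ++ [g i] ∈ T := by
  simp [tupleTree]

theorem encodeNode_append_singleton (l : List (Fin n → A)) (g : Fin n → A) :
    encodeNode n (l ++ [g]) = encodeNode n l ++ [Sum.inr ⟨n, g⟩] := by
  simp [encodeNode]

theorem take_succ_encodeNode (l : List (Fin n → A)) (k : ℕ) :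
    (encodeNode n l).take (k + 1) = encodeNode n (l.take k) := by
  simp [encodeNode, List.map_take]

theorem sum_inr_sigma_mk_injective :
    Function.Injective fun f : Fin n → A => (Sum.inr ⟨n, f⟩ : ℕ ⊕ (Σ m : ℕ, Fin m → A)) :=
  fun f g h => by simpa using h

theorem encodeNode_injective : Function.Injective (encodeNode (A := A) n) := fun _ _ h =>
  List.map_injective_iff.2 sum_inr_sigma_mk_injective (List.cons.inj h).2

theorem inl_cons_mem_finHypTree_iff {w : List (ℕ ⊕ (Σ m : ℕ, Fin m → A))} :
    Sum.inl n :: w ∈ finHypTree T ↔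
      0 < n ∧ ∃ l ∈ tupleTree T n, w = l.map (fun f => Sum.inr ⟨n, f⟩) := by
  constructor
  · rintro (h | ⟨m, hm, l, hl, h⟩)
    · exact absurd h (List.cons_ne_nil _ _)
    · obtain ⟨hmn, rfl⟩ := List.cons.inj h
      cases Sum.inl.inj hmn
      exact ⟨hm, l, hl, rfl⟩
  · rintro ⟨hn, l, hl, rfl⟩
    exact .inr ⟨n, hn, l, hl, rfl⟩

theorem finHypTree_prefix_closed (hT : ∀ s ∈ T, ∀ s', s' <+: s → s' ∈ T) :
    ∀ w ∈ finHypTree T, ∀ w', w' <+: w → w' ∈ finHypTree T := by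
  rintro w (rfl | ⟨n, hn, l, hl, rfl⟩) w' hw'
  · exact .inl (List.prefix_nil.1 hw')
  · rw [List.prefix_iff_eq_take] at hw'
    rcases hk : w'.length with _ | k
    · exact .inl (List.length_eq_zero_iff.1 hk)
    · rw [hw', hk, take_succ_encodeNode]
      exact .inr ⟨n, hn, _, take_mem_tupleTree hT hl k, rfl⟩

theorem succ_nil_finHypTree (hT : [] ∈ T) :
    {t | t ∈ finHypTree T ∧ ∃ a, t = [] ++ [a]} =
      (fun n => encodeNode n ([] : List (Fin n → A))) '' {n | 0 < n} := by
  ext t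
  constructor
  · rintro ⟨rfl | ⟨n, hn, l, -, rfl⟩, a, ht⟩
    · simp at ht
    · obtain rfl : l = [] := by simpa [encodeNode] using congrArg List.length ht
      exact ⟨n, hn, rfl⟩
  · rintro ⟨n, hn, rfl⟩
    exact ⟨.inr ⟨n, hn, [], nil_mem_tupleTree hT, rfl⟩, Sum.inl n, rfl⟩

theorem succ_encodeNode_finHypTree (hn : 0 < n) (l : List (Fin n → A)) :
    {t | t ∈ finHypTree T ∧ ∃ a, t = encodeNode n l ++ [a]} =
      (fun g => encodeNode n (l ++ [g])) '' {g | l ++ [g] ∈ tupleTree T n} := by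
  ext t
  constructor
  · rintro ⟨rfl | ⟨m, -, l', hl', rfl⟩, a, ht⟩
    · simp [encodeNode] at ht
    · obtain ⟨hmn, -⟩ := List.cons.inj ht
      cases Sum.inl.inj hmn
      rcases l'.eq_nil_or_concat with rfl | ⟨L, b, rfl⟩
      · simpa [encodeNode] using congrArg List.length ht
      · rw [List.concat_eq_append] at ht hl' ⊢
        rw [encodeNode_append_singleton] at ht
        cases encodeNode_injective (List.append_inj' ht rfl).1
        exact ⟨b, hl', rfl⟩
  · rintro ⟨g, hg, rfl⟩
    exact ⟨.inr ⟨n, hn, _, hg, rfl⟩, _, encodeNode_append_singleton l g⟩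

theorem exists_encodeNode_of_branch {σ : ℕ → ℕ ⊕ (Σ m : ℕ, Fin m → A)}
    (hσ : ∀ k, (List.range k).map σ ∈ finHypTree T) :
    ∃ n, 0 < n ∧ ∃ g : ℕ → Fin n → A, (∀ k, (List.range k).map g ∈ tupleTree T n) ∧
      ∀ k, (List.range (k + 1)).map σ = encodeNode n ((List.range k).map g) := by
  have hsplit : ∀ k, (List.range (k + 1)).map σ =
      σ 0 :: (List.range k).map (fun j => σ (j + 1)) := fun k => by
    simp [List.range_succ_eq_map, Function.comp_def]
  obtain ⟨n, hσ0⟩ : ∃ n, σ 0 = Sum.inl n := by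
    rcases hσ 1 with h | ⟨n, -, l, -, h⟩
    · simp at h
    · exact ⟨n, (List.cons.inj ((hsplit 0).symm.trans h)).1⟩
  have htail : ∀ k, 0 < n ∧ ∃ l ∈ tupleTree T n,
      (List.range k).map (fun j => σ (j + 1)) = l.map (fun f => Sum.inr ⟨n, f⟩) := fun k =>
    inl_cons_mem_finHypTree_iff.1 (hσ0 ▸ hsplit k ▸ hσ (k + 1))
  have hg : ∀ j, ∃ g : Fin n → A, σ (j + 1) = Sum.inr ⟨n, g⟩ := fun j => by
    obtain ⟨-, l, -, hl⟩ := htail (j + 1)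
    obtain ⟨g, -, hg⟩ :=
      List.mem_map.1 (hl ▸ List.mem_map_of_mem (List.self_mem_range_succ (n := j)))
    exact ⟨g, hg.symm⟩
  choose g hg using hg
  have hmap : ∀ k, (List.range k).map (fun j => σ (j + 1)) =
      ((List.range k).map g).map (fun f => Sum.inr ⟨n, f⟩) := fun k => by
    simp [hg]
  refine ⟨n, (htail 0).1, g, fun k => ?_, fun k => by rw [hsplit, hσ0, hmap]; rfl⟩
  obtain ⟨-, l, hl, hkl⟩ := htail k
  rwa [List.map_injective_iff.2 sum_inr_sigma_mk_injective ((hmap k).symm.trans hkl)]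

end Trees

namespace IsSierpinskiStratification

variable {X A : Type*} [TopologicalSpace X] {T : Set (List A)} {Xs : List A → Set X}

theorem nil_mem (hT : IsSierpinskiStratification T Xs) : [] ∈ T :=
  let ⟨s, hs⟩ := hT.nonempty
  hT.prefix_closed s hs [] List.nil_prefix

theorem eq_biUnion_append (hT : IsSierpinskiStratification T Xs) {s : List A} (hs : s ∈ T) :
    Xs s = ⋃ a ∈ {a | s ++ [a] ∈ T}, Xs (s ++ [a]) := by
  rw [hT.succ_eq s hs]
  ext
  simp

theorem selectionRanges_eq_biUnion_append (hT : IsSierpinskiStratification T Xs) {n : ℕ}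
    {l : List (Fin n → A)} (hl : l ∈ tupleTree T n) :
    FinHyp.selectionRanges (fun i => Xs (l.map (· i))) =
      ⋃ g ∈ {g | l ++ [g] ∈ tupleTree T n},
        FinHyp.selectionRanges (fun i => Xs ((l ++ [g]).map (· i))) := by
  calc FinHyp.selectionRanges (fun i => Xs (l.map (· i)))
      = FinHyp.selectionRanges fun i =>
          ⋃ a ∈ {a | l.map (· i) ++ [a] ∈ T}, Xs (l.map (· i) ++ [a]) :=
        congrArg _ (funext fun i => hT.eq_biUnion_append (hl i))
    _ = _ := by
      rw [FinHyp.selectionRanges_biUnion]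
      simp [append_singleton_mem_tupleTree_iff]

end IsSierpinskiStratification

theorem finHyp_sierpinskiStratification_general {X A : Type*} [TopologicalSpace X]
    [TopologicalSpace.MetrizableSpace X]
    (T : Set (List A)) (Xs : List A → Set X)
    (hT : IsSierpinskiStratification T Xs)
    (Y : List (ℕ ⊕ (Σ m : ℕ, Fin m → A)) → Set (FinHyp X))
    (hYroot : Y [] = Set.univ)
    (hYnode : ∀ (n : ℕ), 0 < n → ∀ l : List (Fin n → A),
      (∀ i : Fin n, l.map (fun g => g i) ∈ T) →
      Y (encodeNode n l) = {F : FinHyp X |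
        ∃ f : Fin n → X, (∀ i, f i ∈ Xs (l.map (fun g => g i))) ∧ (F : Set X) = Set.range f}) :
    IsSierpinskiStratification
      (X := FinHyp X)
      ({[]} ∪ {w | ∃ (n : ℕ), 0 < n ∧ ∃ l : List (Fin n → A),
        (∀ i : Fin n, l.map (fun g => g i) ∈ T) ∧ w = encodeNode n l})
      Y := by
  have hY : ∀ n, 0 < n → ∀ l ∈ tupleTree T n,
      Y (encodeNode n l) = FinHyp.selectionRanges fun i => Xs (l.map (· i)) := hYnode
  have := hT.countable_alphabet
  change IsSierpinskiStratification (finHypTree T) Y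
  refine ⟨inferInstance, ⟨[], .inl rfl⟩, finHypTree_prefix_closed hT.prefix_closed, ?_, hYroot,
    ?_, fun σ hσ => ?_⟩
  · rintro w (rfl | ⟨n, hn, l, hl, rfl⟩)
    · exact hYroot ▸ isClosed_univ
    · exact hY n hn l hl ▸ FinHyp.isClosed_selectionRanges fun i => hT.isClosed _ (hl i)
  · rintro w (rfl | ⟨n, hn, l, hl, rfl⟩)
    · rw [succ_nil_finHypTree hT.nil_mem, biUnion_image, hYroot,
        ← FinHyp.iUnion_selectionRanges_univ]
      refine iUnion₂_congr fun n hn => ?_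
      simp [hY n hn [] (nil_mem_tupleTree hT.nil_mem), hT.root]
    · rw [succ_encodeNode_finHypTree hn l, biUnion_image, hY n hn l hl,
        hT.selectionRanges_eq_biUnion_append hl]
      exact iUnion₂_congr fun g hg => (hY n hn _ hg).symm
  · obtain ⟨n, hn, g, hgT, hσg⟩ := exists_encodeNode_of_branch hσ
    choose p hp using fun i => hT.branch_converges (fun j => g j i) fun k => by
      simpa [Function.comp_def] using hgT k i
    have : Nonempty (Fin n) := Fin.pos_iff_nonempty.1 hn
    refine ⟨FinHyp.ofRange p, tendsto_smallSets_iff.1 ?_⟩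
    refine (tendsto_add_atTop_iff_nat 1).1 ?_
    simp only [hσg, hY n hn _ (hgT _), List.map_map]
    exact FinHyp.tendsto_selectionRanges fun i => tendsto_smallSets_iff.2 (hp i)

/-- Let `(Xs s)_{s ∈ T}` be a Sierpiński stratification of a separable metrizable space `X`.
Let `T' = {∅} ∪ {⟨n⟩⌢(s₁*⋯*sₙ) : n ≥ 1, s₁*⋯*sₙ ∈ Tⁿ}`, where `Tⁿ` is the tree of
`n`-tuples of equal-length nodes of `T` ordered coordinatewise, and let
`Y ∅ = ℱ(X)` and `Y (⟨n⟩⌢(s₁*⋯*sₙ)) = φₙ[Xs s₁ × ⋯ × Xs sₙ]`.  Then `(Y t)_{t ∈ T'}` is a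
Sierpiński stratification of `ℱ(X)`. -/
theorem finHyp_sierpinskiStratification {X A : Type*} [TopologicalSpace X]
    [TopologicalSpace.SeparableSpace X] [TopologicalSpace.MetrizableSpace X]
    (T : Set (List A)) (Xs : List A → Set X)
    (hT : IsSierpinskiStratification T Xs)
    (Y : List (ℕ ⊕ (Σ m : ℕ, Fin m → A)) → Set (FinHyp X))
    (hYroot : Y [] = Set.univ)
    (hYnode : ∀ (n : ℕ), 0 < n → ∀ l : List (Fin n → A),
      (∀ i : Fin n, l.map (fun g => g i) ∈ T) →
      Y (encodeNode n l) = {F : FinHyp X |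
        ∃ f : Fin n → X, (∀ i, f i ∈ Xs (l.map (fun g => g i))) ∧ (F : Set X) = Set.range f}) :
    IsSierpinskiStratification
      (X := FinHyp X)
      ({[]} ∪ {w | ∃ (n : ℕ), 0 < n ∧ ∃ l : List (Fin n → A),
        (∀ i : Fin n, l.map (fun g => g i) ∈ T) ∧ w = encodeNode n l})
      Y :=
  finHyp_sierpinskiStratification_general T Xs hT Y hYroot hYnode
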